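/- Let G=(V,E) be a finite connected simple graph with radius R(G) ≥ 1, let c ∈ C(G), let y ∈ V satisfy d_G(c,y) = R(G), and let γ be a shortest path from c to y. Then there exists a vertex z ≠ y such that every shortest path μ from c to z satisfies γ ∩ μ = {c}, and R(G) − 1 ≤ d_G(c,z) ≤ R(G). -/

import Mathlib

open SimpleGraph

noncomputable def eccentr {V : Type} (G : SimpleGraph V) (x : V) : ℕ :=
  sSup (Set.range (G.dist x))

noncomputable def grRadius {V : Type} (G : SimpleGraph V) : ℕ :=
  sInf (Set.range (eccentr G))

def ncontract {V : Type} (G : SimpleGraph V) (x : V) :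
    SimpleGraph {v : V // ¬ G.Adj x v} where
  Adj a b := G.Adj a.1 b.1 ∨
    (a.1 = x ∧ b.1 ≠ x ∧ ∃ y, G.Adj x y ∧ G.Adj y b.1) ∨
    (b.1 = x ∧ a.1 ≠ x ∧ ∃ y, G.Adj x y ∧ G.Adj y a.1)
  symm := ⟨fun a b h => by
    rcases h with h | h | h
    · exact Or.inl h.symm
    · exact Or.inr (Or.inr h)
    · exact Or.inr (Or.inl h)⟩
  loopless := ⟨fun a h => by
    rcases h with h | ⟨h1, h2, -⟩ | ⟨h1, h2, -⟩
    · exact G.loopless.irrefl _ h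
    · exact h2 h1
    · exact h2 h1⟩

/-
Let `c₁` be the vertex following `c` on `γ` and let `z` be a vertex farthest from `c₁`, so
`d(c₁, z) = r(c₁) ≥ R ≥ r(c) ≥ d(c, z)`. Since `d(c₁, y) < R`, `z ≠ y`, and `d(c, z) ≥ d(c₁, z) - 1`.
If a shortest `c`–`z` path met `γ` in some `v ≠ c`, then `v` lies on the part of `γ` after `c₁`,
so `d(c₁, v) < d(c, v)`; following the shortest path from `v` on would give `d(c₁, z) < d(c, z)`.
-/

namespace SimpleGraph

variable {V : Type} {G : SimpleGraph V}

lemma Walk.dist_add_dist_le_length [DecidableEq V] {a b v : V} (p : G.Walk a b)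
    (h : v ∈ p.support) : G.dist a v + G.dist v b ≤ p.length := by
  rw [← p.take_spec h, Walk.length_append]
  exact Nat.add_le_add (dist_le _) (dist_le _)

lemma dist_lt_of_mem_support_of_mem_support {c c₁ y w v : V} (p : G.Walk c₁ y)
    (hp : p.length < G.dist c y) (μ : G.Walk c w) (hμ : μ.length = G.dist c w)
    (hvp : v ∈ p.support) (hvμ : v ∈ μ.support) : G.dist c₁ w < G.dist c w := by
  classical
  have hcy : G.dist c y ≤ G.dist c v + G.dist v y :=
    (p.dropUntil v hvp).reachable.dist_triangle_right c
  have hc₁w : G.dist c₁ w ≤ G.dist c₁ v + G.dist v w :=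
    (p.takeUntil v hvp).reachable.dist_triangle_left w
  have hp_split := p.dist_add_dist_le_length hvp
  have hμ_split := μ.dist_add_dist_le_length hvμ
  omega

lemma grRadius_le_eccentr (x : V) : grRadius G ≤ eccentr G x :=
  Nat.sInf_le ⟨x, rfl⟩

variable [Finite V]

lemma dist_le_eccentr (x y : V) : G.dist x y ≤ eccentr G x :=
  le_csSup (Set.finite_range _).bddAbove ⟨y, rfl⟩

lemma exists_dist_eq_eccentr (x : V) : ∃ z, G.dist x z = eccentr G x :=
  Nat.sSup_mem (s := Set.range (G.dist x)) ⟨_, x, rfl⟩ (Set.finite_range _).bddAbove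

end SimpleGraph

theorem stmt_1 {V : Type} [Fintype V] (G : SimpleGraph V)
    (hR : 1 ≤ grRadius G) (c y : V) (hc : eccentr G c = grRadius G)
    (hy : G.dist c y = grRadius G) (γ : G.Walk c y)
    (hγl : γ.length = grRadius G) :
    ∃ z : V, z ≠ y ∧
      (∀ μ : G.Walk c z, μ.IsPath → μ.length = G.dist c z →
        ∀ v ∈ γ.support, v ∈ μ.support → v = c) ∧
      grRadius G - 1 ≤ G.dist c z ∧ G.dist c z ≤ grRadius G := by
  have hcy : c ≠ y := by
    rintro rfl
    rw [dist_self] at hy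
    omega
  obtain ⟨c₁, hadj, p, rfl⟩ := Walk.exists_eq_cons_of_ne hcy γ
  rw [Walk.length_cons] at hγl
  obtain ⟨z, hz⟩ := exists_dist_eq_eccentr (G := G) c₁
  have hRz : grRadius G ≤ G.dist c₁ z := hz ▸ grRadius_le_eccentr c₁
  have hcz : G.dist c z ≤ grRadius G := hc ▸ dist_le_eccentr c z
  have hzy : z ≠ y := by
    rintro rfl
    have hp_dist := dist_le p
    omega
  have hc₁z : G.dist c₁ z ≤ G.dist c₁ c + G.dist c z := hadj.symm.reachable.dist_triangle_left z
  rw [dist_eq_one_iff_adj.mpr hadj.symm] at hc₁z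
  refine ⟨z, hzy, fun μ _ hμ v hvγ hvμ => ?_, by omega, hcz⟩
  by_contra hvc
  have hvp : v ∈ p.support := by
    simpa [Walk.support_cons, hvc] using hvγ
  have hc₁z_lt := dist_lt_of_mem_support_of_mem_support p (by omega) μ hμ hvp hvμ
  omega
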